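/- arXiv:math/0111280 — 2 statements merged into one kernel-verified Lean document; each statement's English description precedes it below -/
import Mathlib

section
/- The set of divisors of the Coxeter element (1 2 ... n) in S_n under the reflection-length partial order, ordered by σ ≼ τ iff ℓ(σ) + ℓ(σ⁻¹τ) = ℓ(τ), forms a lattice (isomorphic to the lattice of non-crossing partitions of n). -/
/-!
Multiplying a permutation by a transposition merges two of its cycles or splits one, so
reflection length is `n` minus the number of cycles, and `σ ≼ τ` forces the cycles of `σ` to
refine those of `τ`. Walking down from `c` by splitting cycles, every divisor of `c` has
increasing (`Aligned`) and noncrossing cycles, and such a permutation is determined by its cycle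
partition. Conversely, below such a `σ` every noncrossing partition finer than its cycles is
reached by repeatedly splitting a cycle along an interval that is a union of blocks. So on
divisors `≼` is refinement of noncrossing partitions; these are closed under intersection, so
meets are intersections and joins are meets of all upper bounds.
-/

/-- Reflection length in the symmetric group: minimal number of transpositions. -/
noncomputable def reflectionLength {n : ℕ} (σ : Equiv.Perm (Fin n)) : ℕ :=
  sInf {k | ∃ l : List (Equiv.Perm (Fin n)),
    (∀ τ ∈ l, τ.IsSwap) ∧ l.length = k ∧ l.prod = σ}

/-- The reflection-length (absolute) order on `S_n`. -/
def absLe {n : ℕ} (σ τ : Equiv.Perm (Fin n)) : Prop :=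
  reflectionLength σ + reflectionLength (σ⁻¹ * τ) = reflectionLength τ

/-- The set of divisors of the Coxeter element `(1 2 … n)`. -/
def coxeterDivisors (n : ℕ) : Set (Equiv.Perm (Fin n)) :=
  {σ | absLe σ (finRotate n)}

open Equiv Equiv.Perm

namespace Setoid

variable {α : Type*} (Q : Setoid α) (a b : α)

def merge : Setoid α where
  r x y := Q x y ∨ (Q x a ∧ Q b y) ∨ (Q x b ∧ Q a y)
  iseqv := by
    refine ⟨fun x => .inl (Q.refl' x), ?_, ?_⟩ <;> grind [Setoid.symm', Setoid.trans']

variable {Q a b}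

theorem le_merge : Q ≤ Q.merge a b := fun _ _ h => .inl h

theorem merge_rel_left_right : Q.merge a b a b := .inr (.inl ⟨Q.refl' a, Q.refl' b⟩)

theorem merge_eq_self (h : Q a b) : Q.merge a b = Q := by
  refine le_antisymm (fun x y hxy => ?_) le_merge
  rcases hxy with hxy | ⟨hx, hy⟩ | ⟨hx, hy⟩
  exacts [hxy, Q.trans' (Q.trans' hx h) hy, Q.trans' (Q.trans' hx (Q.symm' h)) hy]

theorem merge_le_merge {P : Setoid α} (h : P ≤ Q.merge a b) : P.merge a b ≤ Q.merge a b := by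
  rintro x y (hxy | ⟨hx, hy⟩ | ⟨hx, hy⟩)
  · exact h hxy
  · exact (Q.merge a b).trans' (h hx) ((Q.merge a b).trans' merge_rel_left_right (h hy))
  · exact (Q.merge a b).trans' (h hx)
      ((Q.merge a b).trans' ((Q.merge a b).symm' merge_rel_left_right) (h hy))

theorem card_quotient_merge_add_one [Finite α] (h : ¬ Q a b) :
    Nat.card (Quotient (Q.merge a b)) + 1 = Nat.card (Quotient Q) := by
  let π : ({⟦b⟧}ᶜ : Set (Quotient Q)) → Quotient (Q.merge a b) :=
    fun q => Quotient.map id (fun _ _ => Or.inl) q.1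
  have hπ : π.Bijective := by
    constructor
    · rintro ⟨⟨x⟩, hx⟩ ⟨⟨y⟩, hy⟩ hxy
      rcases Quotient.exact hxy with hxy | ⟨-, hy'⟩ | ⟨hx', -⟩
      · exact Subtype.ext (Quotient.sound hxy)
      · exact absurd (Quotient.sound (Q.symm' hy')) hy
      · exact absurd (Quotient.sound hx') hx
    · rintro ⟨x⟩
      by_cases hx : Q x b
      · refine ⟨⟨⟦a⟧, fun ha => h (Quotient.exact ha)⟩, Quotient.sound ?_⟩
        exact .inr (.inl ⟨Q.refl' a, Q.symm' hx⟩)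
      · exact ⟨⟨⟦x⟧, fun hb => hx (Quotient.exact hb)⟩, rfl⟩
  rw [← Nat.card_eq_of_bijective π hπ, Nat.card_coe_set_eq,
    ← Set.ncard_singleton (⟦b⟧ : Quotient Q), Set.ncard_compl_add_ncard]

end Setoid

namespace Equiv.Perm

variable {α : Type*} {σ : Perm α} {a b x y : α}

theorem SameCycle.mem_of_mapsTo [Finite α] {s : Set α} (hs : Set.MapsTo σ s s)
    (hxy : σ.SameCycle x y) (hx : x ∈ s) : y ∈ s := by
  obtain ⟨i, rfl⟩ := hxy.exists_nat_pow_eq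
  exact hs.perm_pow i hx

theorem sameCycle_setoid_le [Finite α] {S : Setoid α} (h : ∀ z, S z (σ z)) :
    SameCycle.setoid σ ≤ S := fun x _ hxy =>
  hxy.mem_of_mapsTo (s := {y | S x y}) (fun _ hz => S.trans' hz (h _)) (S.refl' x)

theorem sameCycle_setoid_inv : SameCycle.setoid σ⁻¹ = SameCycle.setoid σ :=
  Setoid.ext fun _ _ => sameCycle_inv

/-- Fixed points count as cycles, unlike in `Equiv.Perm.cycleType`. -/
noncomputable def numCycles (σ : Perm α) : ℕ := Nat.card (Quotient (SameCycle.setoid σ))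

theorem numCycles_inv : numCycles σ⁻¹ = numCycles σ := by
  rw [numCycles, sameCycle_setoid_inv, numCycles]

theorem numCycles_one : numCycles (1 : Perm α) = Nat.card α := by
  have : SameCycle.setoid (1 : Perm α) = ⊥ := Setoid.ext fun _ _ => sameCycle_one
  rw [numCycles, this, Nat.card_congr Setoid.quotientBotEquiv]

variable [Finite α]

theorem numCycles_le : numCycles σ ≤ Nat.card α :=
  Nat.card_le_card_of_surjective _ Quotient.mk_surjective

theorem eq_one_of_card_le_numCycles (h : Nat.card α ≤ numCycles σ) : σ = 1 := by
  have hinj := (Quotient.mk_surjective.bijective_of_nat_card_le h).1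
  exact Equiv.ext fun x => (hinj (Quotient.sound (sameCycle_apply_right.2 .rfl))).symm

variable [DecidableEq α]

theorem sameCycle_setoid_mul_swap_le :
    SameCycle.setoid (σ * swap a b) ≤ (SameCycle.setoid σ).merge a b := by
  refine sameCycle_setoid_le fun z => ?_
  have hσ : ∀ w, σ.SameCycle w (σ w) := fun _ => sameCycle_apply_right.2 .rfl
  rw [mul_apply]
  rcases eq_or_ne z a with rfl | hza
  · rw [swap_apply_left]
    exact .inr (.inl ⟨.rfl, hσ b⟩)
  rcases eq_or_ne z b with rfl | hzb
  · rw [swap_apply_right]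
    exact .inr (.inr ⟨.rfl, hσ a⟩)
  rw [swap_apply_of_ne_of_ne hza hzb]
  exact .inl (hσ z)

theorem merge_sameCycle_setoid_mul_swap :
    (SameCycle.setoid (σ * swap a b)).merge a b = (SameCycle.setoid σ).merge a b := by
  refine le_antisymm (Setoid.merge_le_merge sameCycle_setoid_mul_swap_le) ?_
  simpa only [mul_swap_mul_self] using
    Setoid.merge_le_merge (sameCycle_setoid_mul_swap_le (σ := σ * swap a b) (a := a) (b := b))

theorem sameCycle_mul_swap_of_not_sameCycle (h : ¬σ.SameCycle a b) :
    (σ * swap a b).SameCycle a b := by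
  by_contra hb
  have key : ∀ k : ℕ, (σ * swap a b).SameCycle a ((σ ^ (k + 1)) b) := by
    intro k
    induction k with
    | zero => simpa using (sameCycle_apply_right (f := σ * swap a b) (x := a) (y := a)).2 .rfl
    | succ k ih =>
      have hza : (σ ^ (k + 1)) b ≠ a := fun hz =>
        h (hz ▸ sameCycle_pow_left.2 (SameCycle.refl σ b))
      have hzb : (σ ^ (k + 1)) b ≠ b := fun hz => hb (by rwa [hz] at ih)
      have := sameCycle_apply_right.2 ih
      rwa [mul_apply, swap_apply_of_ne_of_ne hza hzb, ← mul_apply, ← pow_succ'] at this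
  have := key (orderOf σ - 1)
  rw [Nat.sub_add_cancel (orderOf_pos σ), pow_orderOf_eq_one] at this
  exact hb this

theorem not_sameCycle_mul_swap_of_sameCycle (hab : a ≠ b) (h : σ.SameCycle a b) :
    ¬(σ * swap a b).SameCycle a b := by
  classical
  have hex : ∃ q, 0 < q ∧ (σ ^ q) b = a := by
    obtain ⟨q, hq, -, hqa⟩ := h.symm.exists_pow_eq''
    exact ⟨q, hq, hqa⟩
  set q := Nat.find hex
  obtain ⟨hq, hqa⟩ : 0 < q ∧ (σ ^ q) b = a := Nat.find_spec hex
  -- the orbit of `a` under `σ * swap a b` is `σ b, σ² b, …, σ^q b = a`, which misses `b`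
  let s : Set α := {z | ∃ i, 0 < i ∧ i ≤ q ∧ (σ ^ i) b = z}
  have hbs : b ∉ s := by
    rintro ⟨i, hi, hiq, hib⟩
    rcases eq_or_lt_of_le hiq with rfl | hiq
    · exact hab (hqa.symm.trans hib)
    · refine Nat.find_min hex (show q - i < q by omega) ⟨by omega, ?_⟩
      calc (σ ^ (q - i)) b = (σ ^ (q - i)) ((σ ^ i) b) := by rw [hib]
        _ = a := by rw [← mul_apply, ← pow_add, Nat.sub_add_cancel hiq.le, hqa]
  have hs : Set.MapsTo (σ * swap a b) s s := by
    rintro _ ⟨i, hi, hiq, rfl⟩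
    rcases eq_or_lt_of_le hiq with rfl | hiq
    · exact ⟨1, one_pos, hq, by rw [hqa, mul_apply, swap_apply_left, pow_one]⟩
    · have hza : (σ ^ i) b ≠ a := fun hz => Nat.find_min hex hiq ⟨hi, hz⟩
      have hzb : (σ ^ i) b ≠ b := fun hz => hbs ⟨i, hi, hiq.le, hz⟩
      refine ⟨i + 1, i.succ_pos, hiq, ?_⟩
      rw [mul_apply, swap_apply_of_ne_of_ne hza hzb, pow_succ', mul_apply]
  exact fun hσ' => hbs (hσ'.mem_of_mapsTo hs ⟨q, hq, le_rfl, hqa⟩)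

theorem sameCycle_setoid_mul_swap_of_not_sameCycle (h : ¬σ.SameCycle a b) :
    SameCycle.setoid (σ * swap a b) = (SameCycle.setoid σ).merge a b := by
  rw [← merge_sameCycle_setoid_mul_swap,
    Setoid.merge_eq_self (sameCycle_mul_swap_of_not_sameCycle h)]

theorem merge_sameCycle_setoid_mul_swap_of_sameCycle (h : σ.SameCycle a b) :
    (SameCycle.setoid (σ * swap a b)).merge a b = SameCycle.setoid σ := by
  rw [merge_sameCycle_setoid_mul_swap, Setoid.merge_eq_self h]

theorem SameCycle.mul_swap (hxy : σ.SameCycle x y) (h : ¬σ.SameCycle a b) :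
    (σ * swap a b).SameCycle x y :=
  (sameCycle_setoid_mul_swap_of_not_sameCycle h).ge (Setoid.le_merge hxy)

theorem SameCycle.of_mul_swap (hxy : (σ * swap a b).SameCycle x y) (h : σ.SameCycle a b) :
    σ.SameCycle x y :=
  (merge_sameCycle_setoid_mul_swap_of_sameCycle h).le (Setoid.le_merge hxy)

theorem sameCycle_mul_swap_iff_of_not_sameCycle (h : σ.SameCycle a b) (hx : ¬σ.SameCycle x a) :
    (σ * swap a b).SameCycle x y ↔ σ.SameCycle x y := by
  refine ⟨fun hxy => hxy.of_mul_swap h, fun hxy => ?_⟩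
  rcases (merge_sameCycle_setoid_mul_swap_of_sameCycle h).ge hxy with hxy | ⟨hxa, -⟩ | ⟨hxb, -⟩
  · exact hxy
  · exact absurd (hxa.of_mul_swap h) hx
  · exact absurd ((hxb.of_mul_swap h).trans h.symm) hx

theorem numCycles_mul_swap_add_one (h : ¬σ.SameCycle a b) :
    numCycles (σ * swap a b) + 1 = numCycles σ := by
  rw [numCycles, sameCycle_setoid_mul_swap_of_not_sameCycle h]
  exact Setoid.card_quotient_merge_add_one h

theorem numCycles_mul_swap_eq_add_one (hab : a ≠ b) (h : σ.SameCycle a b) :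
    numCycles (σ * swap a b) = numCycles σ + 1 := by
  rw [numCycles, numCycles, ← merge_sameCycle_setoid_mul_swap_of_sameCycle h]
  exact (Setoid.card_quotient_merge_add_one (not_sameCycle_mul_swap_of_sameCycle hab h)).symm

theorem exists_isSwap_list (σ : Perm α) : ∃ l : List (Perm α),
    (∀ t ∈ l, t.IsSwap) ∧ l.prod = σ ∧ l.length + numCycles σ = Nat.card α := by
  induction h : Nat.card α - numCycles σ generalizing σ with
  | zero =>
    have hle : numCycles σ ≤ Nat.card α := numCycles_le
    refine ⟨[], by simp, (eq_one_of_card_le_numCycles (by omega)).symm, ?_⟩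
    rw [List.length_nil]
    omega
  | succ k ih =>
    obtain ⟨x, hx⟩ : ∃ x, σ x ≠ x := by
      by_contra! hσ
      rw [show σ = 1 from Equiv.ext hσ, numCycles_one] at h
      omega
    have hsplit := numCycles_mul_swap_eq_add_one hx.symm (sameCycle_apply_right.2 .rfl)
    have hle : numCycles (σ * swap x (σ x)) ≤ Nat.card α := numCycles_le
    obtain ⟨l, hl, hprod, hlen⟩ := ih (σ * swap x (σ x)) (by omega)
    refine ⟨l ++ [swap x (σ x)], fun t ht => ?_, ?_, ?_⟩
    · rcases List.mem_append.1 ht with ht | ht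
      exacts [hl t ht, List.mem_singleton.1 ht ▸ ⟨x, σ x, hx.symm, rfl⟩]
    · rw [List.prod_append, hprod, List.prod_singleton, mul_swap_mul_self]
    · rw [List.length_append, List.length_singleton]
      omega

theorem card_le_length_add_numCycles_prod {l : List (Perm α)} (hl : ∀ t ∈ l, t.IsSwap) :
    Nat.card α ≤ l.length + numCycles l.prod := by
  induction l using List.reverseRecOn with
  | nil => simp [numCycles_one]
  | append_singleton l t ih =>
    obtain ⟨a, b, hab, rfl⟩ := hl t (by simp)
    have := ih fun t ht => hl t (by simp [ht])
    rw [List.prod_append, List.prod_singleton, List.length_append, List.length_singleton]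
    by_cases h : l.prod.SameCycle a b
    · have := numCycles_mul_swap_eq_add_one hab h
      omega
    · have := numCycles_mul_swap_add_one h
      omega

end Equiv.Perm

section ReflectionLength

variable {n : ℕ} {σ τ : Perm (Fin n)} {a b : Fin n}

theorem reflectionLength_le_length {l : List (Perm (Fin n))} (hl : ∀ t ∈ l, t.IsSwap) :
    reflectionLength l.prod ≤ l.length :=
  Nat.sInf_le ⟨l, hl, rfl, rfl⟩

theorem reflectionLength_add_numCycles (σ : Perm (Fin n)) :
    reflectionLength σ + numCycles σ = n := by
  obtain ⟨l, hl, rfl, hlen⟩ := exists_isSwap_list σ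
  obtain ⟨l₀, hl₀, hlen₀, hprod₀⟩ : reflectionLength l.prod ∈ {k | ∃ l₀ : List (Perm (Fin n)),
      (∀ t ∈ l₀, t.IsSwap) ∧ l₀.length = k ∧ l₀.prod = l.prod} :=
    Nat.sInf_mem ⟨l.length, l, hl, rfl, rfl⟩
  have hlower := card_le_length_add_numCycles_prod hl₀
  have hupper := reflectionLength_le_length hl
  rw [Nat.card_fin] at hlen hlower
  rw [hprod₀] at hlower
  omega

theorem reflectionLength_inv (σ : Perm (Fin n)) : reflectionLength σ⁻¹ = reflectionLength σ := by
  have := reflectionLength_add_numCycles σ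
  have := reflectionLength_add_numCycles σ⁻¹
  rw [numCycles_inv] at this
  omega

theorem reflectionLength_eq_zero_iff : reflectionLength σ = 0 ↔ σ = 1 := by
  have := reflectionLength_add_numCycles σ
  constructor
  · intro h
    exact eq_one_of_card_le_numCycles (by rw [Nat.card_fin]; omega)
  · rintro rfl
    rw [numCycles_one, Nat.card_fin] at this
    omega

theorem reflectionLength_mul_swap_of_not_sameCycle (h : ¬σ.SameCycle a b) :
    reflectionLength (σ * swap a b) = reflectionLength σ + 1 := by
  have := reflectionLength_add_numCycles σ
  have := reflectionLength_add_numCycles (σ * swap a b)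
  have := numCycles_mul_swap_add_one h
  omega

theorem reflectionLength_mul_swap_add_one (hab : a ≠ b) (h : σ.SameCycle a b) :
    reflectionLength (σ * swap a b) + 1 = reflectionLength σ := by
  have := reflectionLength_add_numCycles σ
  have := reflectionLength_add_numCycles (σ * swap a b)
  have := numCycles_mul_swap_eq_add_one hab h
  omega

theorem reflectionLength_swap (hab : a ≠ b) : reflectionLength (swap a b) = 1 := by
  have h := reflectionLength_mul_swap_of_not_sameCycle (σ := 1) (sameCycle_one.not.2 hab)
  rwa [one_mul, reflectionLength_eq_zero_iff.2 rfl] at h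

theorem reflectionLength_mul_le (σ τ : Perm (Fin n)) :
    reflectionLength (σ * τ) ≤ reflectionLength σ + reflectionLength τ := by
  obtain ⟨l, hl, rfl, hlen⟩ := exists_isSwap_list σ
  obtain ⟨l', hl', rfl, hlen'⟩ := exists_isSwap_list τ
  have := reflectionLength_add_numCycles l.prod
  have := reflectionLength_add_numCycles l'.prod
  have hle := reflectionLength_le_length (l := l ++ l') fun t ht =>
    (List.mem_append.1 ht).elim (hl t) (hl' t)
  rw [List.prod_append, List.length_append] at hle
  rw [Nat.card_fin] at hlen hlen'
  omega

end ReflectionLength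

section AbsoluteOrder

variable {n : ℕ} {σ τ ρ : Perm (Fin n)} {a b : Fin n}

theorem absLe_refl (σ : Perm (Fin n)) : absLe σ σ := by
  rw [absLe, inv_mul_cancel, reflectionLength_eq_zero_iff.2 rfl, add_zero]

theorem absLe_trans (h₁ : absLe σ τ) (h₂ : absLe τ ρ) : absLe σ ρ := by
  have h₃ := reflectionLength_mul_le (σ⁻¹ * τ) (τ⁻¹ * ρ)
  have h₄ := reflectionLength_mul_le σ (σ⁻¹ * ρ)
  rw [show σ⁻¹ * τ * (τ⁻¹ * ρ) = σ⁻¹ * ρ by group] at h₃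
  rw [mul_inv_cancel_left] at h₄
  unfold absLe at *
  omega

theorem mul_swap_absLe (hab : a ≠ b) (h : σ.SameCycle a b) : absLe (σ * swap a b) σ := by
  rw [absLe, mul_inv_rev, swap_inv, inv_mul_cancel_right, reflectionLength_swap hab,
    reflectionLength_mul_swap_add_one hab h]

theorem exists_absLe_mul_swap (h : absLe σ τ) (hne : σ ≠ τ) :
    ∃ a b, ¬σ.SameCycle a b ∧ absLe (σ * swap a b) τ := by
  obtain ⟨ρ, rfl⟩ : ∃ ρ, τ = σ * ρ := ⟨σ⁻¹ * τ, (mul_inv_cancel_left σ τ).symm⟩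
  obtain ⟨a, ha⟩ : ∃ a, ρ a ≠ a := by
    by_contra! hρ
    exact hne (by rw [show ρ = 1 from Equiv.ext hρ, mul_one])
  have hρ : reflectionLength (swap a (ρ a) * ρ) + 1 = reflectionLength ρ := by
    rw [← reflectionLength_inv, mul_inv_rev, swap_inv, ← reflectionLength_inv ρ]
    exact reflectionLength_mul_swap_add_one ha.symm (sameCycle_inv.2 (sameCycle_apply_right.2 .rfl))
  have h₁ := reflectionLength_mul_le σ (swap a (ρ a))
  have h₂ := reflectionLength_mul_le (σ * swap a (ρ a)) (swap a (ρ a) * ρ)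
  rw [reflectionLength_swap ha.symm] at h₁
  rw [mul_assoc, swap_mul_self_mul] at h₂
  rw [absLe, inv_mul_cancel_left] at h
  refine ⟨a, ρ a, fun hsc => ?_, ?_⟩
  · have := reflectionLength_mul_swap_add_one ha.symm hsc
    omega
  · rw [absLe, mul_inv_rev, swap_inv, mul_assoc, inv_mul_cancel_left]
    omega

@[elab_as_elim]
theorem absLe.head_induction_on {P : Perm (Fin n) → Prop} (h : absLe σ τ) (refl : P τ)
    (head : ∀ ρ a b, ¬ρ.SameCycle a b → absLe (ρ * swap a b) τ → P (ρ * swap a b) → P ρ) :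
    P σ := by
  induction hk : reflectionLength (σ⁻¹ * τ) generalizing σ with
  | zero => rwa [inv_mul_eq_one.1 (reflectionLength_eq_zero_iff.1 hk)]
  | succ k ih =>
    obtain ⟨a, b, hab, hle⟩ := exists_absLe_mul_swap h fun hστ => by
      simp [hστ, reflectionLength_eq_zero_iff.2] at hk
    refine head σ a b hab hle (ih hle ?_)
    have := reflectionLength_mul_swap_of_not_sameCycle hab
    unfold absLe at h hle
    omega

theorem sameCycle_setoid_le_of_absLe (h : absLe σ τ) :
    SameCycle.setoid σ ≤ SameCycle.setoid τ :=
  h.head_induction_on le_rfl fun _ _ _ hab _ hle => le_trans (fun _ _ hxy => hxy.mul_swap hab) hle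

end AbsoluteOrder

namespace Setoid

variable {α : Type*} [LinearOrder α]

def Noncrossing (R : Setoid α) : Prop :=
  ∀ ⦃p q r s⦄, p < q → q < r → r < s → R p r → R q s → R p q

end Setoid

namespace Equiv.Perm

attribute [local instance] LT.toSBtw

variable {α : Type*} [LinearOrder α] {σ τ : Perm α} {a b x y : α}

/-- Each cycle of `σ` visits its points in increasing cyclic order. -/
def Aligned (σ : Perm α) : Prop := ∀ x y, σ.SameCycle x y → ¬sbtw x y (σ x)

theorem Aligned.eq_of_sameCycle_setoid_eq (hσ : σ.Aligned) (hτ : τ.Aligned)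
    (h : SameCycle.setoid σ = SameCycle.setoid τ) : σ = τ := by
  ext x : 1
  have hσx : τ.SameCycle x (σ x) := (Setoid.ext_iff.1 h x (σ x)).1 (sameCycle_apply_right.2 .rfl)
  have hτx : σ.SameCycle x (τ x) := (Setoid.ext_iff.1 h x (τ x)).2 (sameCycle_apply_right.2 .rfl)
  by_cases hx : σ x = x
  · rw [hx, ← hτx.eq_of_left hx]
  by_cases hx' : τ x = x
  · rw [hx', ← hσx.eq_of_left hx']
  have h₁ := hσ x (τ x) hτx
  have h₂ := hτ x (σ x) hσx
  simp only [sbtw_iff] at h₁ h₂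
  grind

variable [DecidableEq α]

theorem Aligned.mul_swap_apply_mem_Ioc_iff (hσ : σ.Aligned) (hab : a < b)
    (hsc : σ.SameCycle a b) {z : α} (hz : σ.SameCycle a z) :
    (σ * swap a b) z ∈ Set.Ioc a b ↔ z ∈ Set.Ioc a b := by
  rw [mul_apply]
  rcases eq_or_ne z a with rfl | hza
  · have h₁ := hσ b z hsc.symm
    have h₂ : σ b ≠ b := fun h => hab.ne (hsc.eq_of_right h)
    rw [swap_apply_left]
    simp only [sbtw_iff, Set.mem_Ioc] at *
    grind
  rcases eq_or_ne z b with rfl | hzb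
  · have h₁ := hσ a z hsc
    have h₂ : σ a ≠ a := fun h => hab.ne (hsc.eq_of_left h)
    rw [swap_apply_right]
    simp only [sbtw_iff, Set.mem_Ioc] at *
    grind
  · have h₁ := hσ z a hz.symm
    have h₂ := hσ z b (hz.symm.trans hsc)
    have h₃ : σ z ≠ z := fun h => hza (hz.eq_of_right h).symm
    rw [swap_apply_of_ne_of_ne hza hzb]
    simp only [sbtw_iff, Set.mem_Ioc] at *
    grind

variable [Finite α]

theorem Aligned.mem_Ioc_iff_of_sameCycle_mul_swap (hσ : σ.Aligned) (hab : a < b)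
    (hsc : σ.SameCycle a b) (hx : σ.SameCycle a x) (hxy : (σ * swap a b).SameCycle x y) :
    x ∈ Set.Ioc a b ↔ y ∈ Set.Ioc a b := by
  have hs : Set.MapsTo (σ * swap a b) {z | σ.SameCycle a z ∧ (z ∈ Set.Ioc a b ↔ x ∈ Set.Ioc a b)}
      {z | σ.SameCycle a z ∧ (z ∈ Set.Ioc a b ↔ x ∈ Set.Ioc a b)} := by
    rintro z ⟨hz, hzx⟩
    have hzz : (σ * swap a b).SameCycle z ((σ * swap a b) z) := sameCycle_apply_right.2 .rfl
    exact ⟨hz.trans (hzz.of_mul_swap hsc), (hσ.mul_swap_apply_mem_Ioc_iff hab hsc hz).trans hzx⟩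
  exact (hxy.mem_of_mapsTo hs ⟨hx, Iff.rfl⟩).2.symm

theorem Aligned.sameCycle_mul_swap_iff (hσ : σ.Aligned) (hab : a < b) (hsc : σ.SameCycle a b)
    (hx : σ.SameCycle a x) (hy : σ.SameCycle a y) :
    (σ * swap a b).SameCycle x y ↔ (x ∈ Set.Ioc a b ↔ y ∈ Set.Ioc a b) := by
  refine ⟨hσ.mem_Ioc_iff_of_sameCycle_mul_swap hab hsc hx, fun hxy => ?_⟩
  have hI : a ∉ Set.Ioc a b ∧ b ∈ Set.Ioc a b := ⟨fun h => h.1.false, hab, le_rfl⟩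
  have side : ∀ z, σ.SameCycle a z →
      (σ * swap a b).SameCycle z (if z ∈ Set.Ioc a b then b else a) := by
    intro z hz
    have hz' : (σ * swap a b).SameCycle z a ∨ (σ * swap a b).SameCycle z b := by
      rcases (merge_sameCycle_setoid_mul_swap_of_sameCycle hsc).ge hz with h | ⟨-, h⟩ | ⟨-, h⟩
      exacts [.inl h.symm, .inr h.symm, .inl h.symm]
    have hside := fun w => hσ.mem_Ioc_iff_of_sameCycle_mul_swap (y := w) hab hsc hz
    split_ifs with hzI
    · exact hz'.resolve_left fun h => hI.1 ((hside a h).1 hzI)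
    · exact hz'.resolve_right fun h => hzI ((hside b h).2 hI.2)
  have hy' := side y hy
  rw [← if_congr hxy rfl rfl] at hy'
  exact (side x hx).trans hy'.symm

theorem Aligned.mul_swap (hσ : σ.Aligned) (hab : a < b) (hsc : σ.SameCycle a b) :
    (σ * swap a b).Aligned := by
  intro x y hxy
  have hxy' := hxy.of_mul_swap hsc
  rw [mul_apply]
  rcases eq_or_ne x a with rfl | hxa
  · have hy := hσ.mem_Ioc_iff_of_sameCycle_mul_swap hab hsc .rfl hxy
    have h₁ := hσ b y (hsc.symm.trans hxy')
    have h₂ := hσ b x hsc.symm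
    rw [swap_apply_left]
    simp only [sbtw_iff, Set.mem_Ioc] at *
    grind
  rcases eq_or_ne x b with rfl | hxb
  · have hy := hσ.mem_Ioc_iff_of_sameCycle_mul_swap hab hsc hsc hxy
    have h₁ := hσ a y (hsc.trans hxy')
    have h₂ := hσ a x hsc
    have h₃ : σ a ≠ a := fun h => hab.ne (hsc.eq_of_left h)
    rw [swap_apply_right]
    simp only [sbtw_iff, Set.mem_Ioc] at *
    grind
  · rw [swap_apply_of_ne_of_ne hxa hxb]
    exact hσ x y hxy'

theorem Aligned.noncrossing_mul_swap (hσ : σ.Aligned) (hN : (SameCycle.setoid σ).Noncrossing)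
    (hab : a < b) (hsc : σ.SameCycle a b) : (SameCycle.setoid (σ * swap a b)).Noncrossing := by
  intro p q r s hpq hqr hrs hpr hqs
  have hpq' : σ.SameCycle p q := hN hpq hqr hrs (hpr.of_mul_swap hsc) (hqs.of_mul_swap hsc)
  by_cases hp : σ.SameCycle a p
  · have hq := hp.trans hpq'
    have h₁ := hσ.mem_Ioc_iff_of_sameCycle_mul_swap hab hsc hp hpr
    have h₂ := hσ.mem_Ioc_iff_of_sameCycle_mul_swap hab hsc hq hqs
    change (σ * swap a b).SameCycle p q
    rw [hσ.sameCycle_mul_swap_iff hab hsc hp hq]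
    simp only [Set.mem_Ioc] at *
    grind
  · exact (sameCycle_mul_swap_iff_of_not_sameCycle hsc fun h => hp h.symm).2 hpq'

end Equiv.Perm

namespace Setoid.Noncrossing

variable {α : Type*} [LinearOrder α] {R : Setoid α}

theorem inf {Q : Setoid α} (hR : R.Noncrossing) (hQ : Q.Noncrossing) : (R ⊓ Q).Noncrossing :=
  fun _ _ _ _ hpq hqr hrs hpr hqs => Setoid.inf_iff_and.2
    ⟨hR hpq hqr hrs (Setoid.inf_iff_and.1 hpr).1 (Setoid.inf_iff_and.1 hqs).1,
      hQ hpq hqr hrs (Setoid.inf_iff_and.1 hpr).2 (Setoid.inf_iff_and.1 hqs).2⟩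

theorem sInf {S : Set (Setoid α)} (hS : ∀ R ∈ S, R.Noncrossing) : (sInf S).Noncrossing :=
  fun _ _ _ _ hpq hqr hrs hpr hqs => Setoid.sInf_iff.2 fun R hR =>
    hS R hR hpq hqr hrs (Setoid.sInf_iff.1 hpr R hR) (Setoid.sInf_iff.1 hqs R hR)

theorem lt_and_lt_of_rel (hR : R.Noncrossing) {w lo hi z u : α} (hlo : R w lo) (hhi : R w hi)
    (hz : lo < z) (hz' : z < hi) (hwz : ¬R w z) (hzu : R z u) : lo < u ∧ u < hi := by
  have hlohi : R lo hi := R.trans' (R.symm' hlo) hhi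
  have hwu : ¬R w u := fun h => hwz (R.trans' h (R.symm' hzu))
  refine ⟨lt_of_not_ge fun hu => ?_, lt_of_not_ge fun hu => ?_⟩
  · rcases hu.lt_or_eq with hu | rfl
    · exact hwu (R.trans' hlo (R.symm' (hR hu hz hz' (R.symm' hzu) hlohi)))
    · exact hwu hlo
  · rcases hu.lt_or_eq with hu | rfl
    · exact hwz (R.trans' hlo (hR hz hz' hu hlohi hzu))
    · exact hwu hhi

theorem exists_convex_block (hR : R.Noncrossing) {B : Finset α} {m x : α}
    (hmin : ∀ z ∈ B, m ≤ z) (hx : x ∈ B) (hxm : ¬R x m) :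
    ∃ w ∈ B, ¬R w m ∧ ∀ p ∈ B, ∀ q ∈ B, ∀ z ∈ B, R w p → R w q → p ≤ z → z ≤ q → R w z := by
  classical
  let hull (w : α) : Finset α :=
    B.filter fun z => ∃ p ∈ B, ∃ q ∈ B, R w p ∧ R w q ∧ p ≤ z ∧ z ≤ q
  obtain ⟨w, hwC, hwmin⟩ := (B.filter fun w => ¬R w m).exists_min_image (fun w => (hull w).card)
    ⟨x, Finset.mem_filter.2 ⟨hx, hxm⟩⟩
  obtain ⟨hw, hwm⟩ := Finset.mem_filter.1 hwC
  refine ⟨w, hw, hwm, fun p hp q hq z hzB hwp hwq hpz hzq => ?_⟩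
  -- otherwise the block of `z` lies strictly inside `(p, q)`, so its hull is smaller
  by_contra hwz
  have hpz : p < z := hpz.lt_of_ne fun h => hwz (h ▸ hwp)
  have hzq : z < q := hzq.lt_of_ne fun h => hwz (h ▸ hwq)
  have hmp : m < p := (hmin p hp).lt_of_ne fun h => hwm (h ▸ hwp)
  have nested := fun {u} => hR.lt_and_lt_of_rel hwp hwq hpz hzq hwz (u := u)
  have hsub : hull z ⊂ hull w := by
    refine Finset.ssubset_iff_of_subset (fun u hu => ?_) |>.2 ⟨p, ?_, fun hpz' => ?_⟩
    · obtain ⟨huB, p', -, q', -, hzp', hzq', hpu, huq⟩ := Finset.mem_filter.1 hu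
      exact Finset.mem_filter.2 ⟨huB, p, hp, q, hq, hwp, hwq,
        (nested hzp').1.le.trans hpu, huq.trans (nested hzq').2.le⟩
    · exact Finset.mem_filter.2 ⟨hp, p, hp, p, hp, hwp, hwp, le_rfl, le_rfl⟩
    · obtain ⟨-, p', -, -, -, hzp', -, hpp', -⟩ := Finset.mem_filter.1 hpz'
      exact (nested hzp').1.not_ge hpp'
  exact (Finset.card_lt_card hsub).not_ge
    (hwmin z (Finset.mem_filter.2 ⟨hzB, fun hzm => (nested hzm).1.not_gt hmp⟩))

theorem exists_saturated_Ioc (hR : R.Noncrossing) {B : Finset α} {x y : α} (hx : x ∈ B)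
    (hy : y ∈ B) (hxy : ¬R x y) : ∃ a ∈ B, ∃ b ∈ B, a < b ∧
      ∀ z ∈ B, ∀ u ∈ B, R z u → (z ∈ Set.Ioc a b ↔ u ∈ Set.Ioc a b) := by
  classical
  have hB : B.Nonempty := ⟨x, hx⟩
  obtain ⟨v, hv, hvm⟩ : ∃ v ∈ B, ¬R v (B.min' hB) := by
    by_contra! h
    exact hxy (R.trans' (h x hx) (R.symm' (h y hy)))
  obtain ⟨w, hw, hwm, hconv⟩ := hR.exists_convex_block (fun z hz => B.min'_le z hz) hv hvm
  -- `(a, b]` is the block of `w`, with `a` the point of `B` just before it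
  let blk := B.filter (R w)
  have hblk : blk.Nonempty := ⟨w, Finset.mem_filter.2 ⟨hw, R.refl' w⟩⟩
  obtain ⟨hloB, hwlo⟩ := Finset.mem_filter.1 (blk.min'_mem hblk)
  obtain ⟨hbB, hwb⟩ := Finset.mem_filter.1 (blk.max'_mem hblk)
  have hbelow : (B.filter (· < blk.min' hblk)).Nonempty := ⟨B.min' hB, Finset.mem_filter.2
    ⟨B.min'_mem hB, (B.min'_le _ hloB).lt_of_ne fun h => hwm (h ▸ hwlo)⟩⟩
  obtain ⟨haB, halo⟩ := Finset.mem_filter.1 ((B.filter (· < blk.min' hblk)).max'_mem hbelow)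
  have hIoc : ∀ z ∈ B, z ∈ Set.Ioc ((B.filter (· < blk.min' hblk)).max' hbelow) (blk.max' hblk) ↔
      R w z := by
    refine fun z hz => ⟨fun ⟨haz, hzb⟩ => hconv _ hloB _ hbB z hz hwlo hwb ?_ hzb, fun hwz => ?_⟩
    · refine le_of_not_gt fun hzlo => haz.not_ge ?_
      exact (B.filter (· < blk.min' hblk)).le_max' z (Finset.mem_filter.2 ⟨hz, hzlo⟩)
    · have hz' : z ∈ blk := Finset.mem_filter.2 ⟨hz, hwz⟩
      exact ⟨halo.trans_le (blk.min'_le z hz'), blk.le_max' z hz'⟩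
  refine ⟨_, haB, _, hbB, (hIoc _ hbB).2 hwb |>.1, fun z hz u hu hzu => ?_⟩
  rw [hIoc z hz, hIoc u hu]
  exact ⟨fun h => R.trans' h hzu, fun h => R.trans' h (R.symm' hzu)⟩

end Setoid.Noncrossing

section CoxeterDivisors

attribute [local instance] LT.toSBtw

variable {n : ℕ} {σ τ : Perm (Fin n)}

theorem aligned_finRotate : (finRotate n).Aligned := by
  intro x y _
  rcases n with _ | m
  · exact x.elim0
  simp only [sbtw_iff, Fin.lt_def, coe_finRotate, Fin.ext_iff, Fin.val_last]
  split_ifs <;> omega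

theorem sameCycle_finRotate (x y : Fin n) : (finRotate n).SameCycle x y := by
  rcases n with _ | _ | m
  · exact x.elim0
  · exact Subsingleton.elim (α := Fin 1) x y ▸ .rfl
  · exact isCycle_finRotate.sameCycle (mem_support.1 (support_finRotate ▸ Finset.mem_univ x))
      (mem_support.1 (support_finRotate ▸ Finset.mem_univ y))

theorem noncrossing_finRotate : (SameCycle.setoid (finRotate n)).Noncrossing :=
  fun p q _ _ _ _ _ _ _ => sameCycle_finRotate p q

theorem aligned_and_noncrossing_of_absLe (h : absLe σ τ) (hτ : τ.Aligned)
    (hτN : (SameCycle.setoid τ).Noncrossing) :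
    σ.Aligned ∧ (SameCycle.setoid σ).Noncrossing := by
  refine h.head_induction_on ⟨hτ, hτN⟩ fun ρ a b hab _ ⟨hA, hN⟩ => ?_
  rcases (show a ≠ b from fun h => hab (h ▸ .rfl)).lt_or_gt with hlt | hlt
  · have hsc := sameCycle_mul_swap_of_not_sameCycle hab
    simpa only [mul_swap_mul_self] using
      And.intro (hA.mul_swap hlt hsc) (hA.noncrossing_mul_swap hN hlt hsc)
  · rw [swap_comm] at hA hN
    have hsc := sameCycle_mul_swap_of_not_sameCycle fun h => hab h.symm
    simpa only [mul_swap_mul_self] using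
      And.intro (hA.mul_swap hlt hsc) (hA.noncrossing_mul_swap hN hlt hsc)

theorem aligned_and_noncrossing_of_mem_coxeterDivisors (h : σ ∈ coxeterDivisors n) :
    σ.Aligned ∧ (SameCycle.setoid σ).Noncrossing :=
  aligned_and_noncrossing_of_absLe h aligned_finRotate noncrossing_finRotate

theorem exists_absLe_sameCycle_setoid_eq (hA : σ.Aligned) (hN : (SameCycle.setoid σ).Noncrossing)
    {R : Setoid (Fin n)} (hR : R.Noncrossing) (hRσ : R ≤ SameCycle.setoid σ) :
    ∃ μ, absLe μ σ ∧ μ.Aligned ∧ SameCycle.setoid μ = R := by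
  induction hk : reflectionLength σ using Nat.strong_induction_on generalizing σ with
  | _ k ih =>
  by_cases hσR : SameCycle.setoid σ ≤ R
  · exact ⟨σ, absLe_refl σ, hA, le_antisymm hσR hRσ⟩
  obtain ⟨x, y, hxy, hRxy⟩ : ∃ x y, σ.SameCycle x y ∧ ¬R x y := by
    simp only [Setoid.le_def, not_forall, exists_prop] at hσR
    exact hσR
  classical
  -- split the cycle of `x` along an interval that is a union of blocks of `R`
  obtain ⟨a, ha, b, hb, hab, hsat⟩ := hR.exists_saturated_Ioc
    (B := Finset.univ.filter (σ.SameCycle x)) (by simp [SameCycle.rfl]) (by simpa using hxy) hRxy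
  simp only [Finset.mem_filter, Finset.mem_univ, true_and] at ha hb hsat
  have hsc : σ.SameCycle a b := ha.symm.trans hb
  have hRσ' : R ≤ SameCycle.setoid (σ * swap a b) := by
    intro z u hzu
    by_cases hz : σ.SameCycle x z
    · have hu := hz.trans (hRσ hzu)
      exact (hA.sameCycle_mul_swap_iff hab hsc (ha.symm.trans hz) (ha.symm.trans hu)).2
        (hsat z hz u hu hzu)
    · exact (sameCycle_mul_swap_iff_of_not_sameCycle hsc fun h => hz (ha.trans h.symm)).2
        (hRσ hzu)
  have hlt := reflectionLength_mul_swap_add_one hab.ne hsc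
  obtain ⟨μ, hμ, hμA, hμR⟩ := ih _ (by omega) (hA.mul_swap hab hsc)
    (hA.noncrossing_mul_swap hN hab hsc) hRσ' rfl
  exact ⟨μ, absLe_trans hμ (mul_swap_absLe hab.ne hsc), hμA, hμR⟩

theorem absLe_iff_sameCycle_setoid_le (hσ : σ ∈ coxeterDivisors n) (hτ : τ ∈ coxeterDivisors n) :
    absLe σ τ ↔ SameCycle.setoid σ ≤ SameCycle.setoid τ := by
  refine ⟨sameCycle_setoid_le_of_absLe, fun h => ?_⟩
  obtain ⟨hσA, hσN⟩ := aligned_and_noncrossing_of_mem_coxeterDivisors hσ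
  obtain ⟨hτA, hτN⟩ := aligned_and_noncrossing_of_mem_coxeterDivisors hτ
  obtain ⟨μ, hμτ, hμA, hμσ⟩ := exists_absLe_sameCycle_setoid_eq hτA hτN hσN h
  rwa [← hμA.eq_of_sameCycle_setoid_eq hσA hμσ]

theorem exists_mem_coxeterDivisors_sameCycle_setoid_eq {R : Setoid (Fin n)} (hR : R.Noncrossing) :
    ∃ σ ∈ coxeterDivisors n, SameCycle.setoid σ = R := by
  obtain ⟨σ, hσ, -, hσR⟩ := exists_absLe_sameCycle_setoid_eq aligned_finRotate
    noncrossing_finRotate hR fun x y _ => sameCycle_finRotate x y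
  exact ⟨σ, hσ, hσR⟩

end CoxeterDivisors

/-- The divisors of the Coxeter element `(1 2 … n)` in the reflection-length order form a
lattice: any two divisors have a least upper bound and a greatest lower bound among the
divisors. -/
theorem coxeterDivisors_lattice (n : ℕ) :
    (∀ σ ∈ coxeterDivisors n, ∀ τ ∈ coxeterDivisors n,
      ∃ μ ∈ coxeterDivisors n, absLe σ μ ∧ absLe τ μ ∧
        ∀ ν ∈ coxeterDivisors n, absLe σ ν → absLe τ ν → absLe μ ν) ∧
    (∀ σ ∈ coxeterDivisors n, ∀ τ ∈ coxeterDivisors n,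
      ∃ μ ∈ coxeterDivisors n, absLe μ σ ∧ absLe μ τ ∧
        ∀ ν ∈ coxeterDivisors n, absLe ν σ → absLe ν τ → absLe ν μ) := by
  have hle := @absLe_iff_sameCycle_setoid_le n
  have hN σ (hσ : σ ∈ coxeterDivisors n) := (aligned_and_noncrossing_of_mem_coxeterDivisors hσ).2
  refine ⟨fun σ hσ τ hτ => ?_, fun σ hσ τ hτ => ?_⟩
  · let U := {R : Setoid (Fin n) | R.Noncrossing ∧ SameCycle.setoid σ ≤ R ∧ SameCycle.setoid τ ≤ R}
    obtain ⟨μ, hμ, hμU⟩ := exists_mem_coxeterDivisors_sameCycle_setoid_eq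
      (Setoid.Noncrossing.sInf fun R (hR : R ∈ U) => hR.1)
    refine ⟨μ, hμ, (hle hσ hμ).2 ?_, (hle hτ hμ).2 ?_, fun ν hν hσν hτν => (hle hμ hν).2 ?_⟩
    · exact hμU ▸ le_sInf fun R hR => hR.2.1
    · exact hμU ▸ le_sInf fun R hR => hR.2.2
    · exact hμU ▸ sInf_le ⟨hN ν hν, (hle hσ hν).1 hσν, (hle hτ hν).1 hτν⟩
  · obtain ⟨μ, hμ, hμR⟩ := exists_mem_coxeterDivisors_sameCycle_setoid_eq ((hN σ hσ).inf (hN τ hτ))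
    refine ⟨μ, hμ, (hle hμ hσ).2 (hμR ▸ inf_le_left), (hle hμ hτ).2 (hμR ▸ inf_le_right),
      fun ν hν hνσ hντ => (hle hν hμ).2 (hμR ▸ le_inf ((hle hν hσ).1 hνσ) ((hle hν hτ).1 hντ))⟩
end

section
/- In the braid group B(A_n), the band generators a_{ts} and a_{rq} commute whenever (t−r)(t−q)(s−r)(s−q) > 0 (i.e. the intervals [s,t] and [q,r] are disjoint or nested). -/
/-!
The sign condition says that `[s, t]` and `[q, r]` are disjoint or nested; up to swapping the two
generators this means `r < s` or `q < s < t < r`. Write `a_{ts} = w_{ts} σ_s w_{ts}⁻¹` with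
`w_{ts} = σ_{t-1} ⋯ σ_{s+1}`. If `r < s`, every letter of `a_{ts}` is at distance at least two from
every letter of `a_{rq}`, so they commute by the far commutation relations. If `q < s < t < r`, the
braid relation `(σ_{i+1} σ_i) σ_{i+1} = σ_i (σ_{i+1} σ_i)` shows that conjugation by `w_{rq}` sends
`σ_{i+1}` to `σ_i` for `q < i < r - 1`; hence `a_{ts}` and `a_{rq}` are the `w_{rq}`-conjugates of
`a_{t+1,s+1}` and `σ_q`, which commute because `q + 2 ≤ s + 1`.
-/

/-- The conjugating word `σ_{t-1} σ_{t-2} ⋯ σ_{s+1}`. -/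
def bandWord {G : Type*} [Group G] (σ : ℕ → G) (t s : ℕ) : G :=
  (((List.range' (s + 1) (t - 1 - s)).reverse).map σ).prod

/-- The band generator `a_{ts} = (σ_{t-1}⋯σ_{s+1}) σ_s (σ_{t-1}⋯σ_{s+1})⁻¹`. -/
def bandGen {G : Type*} [Group G] (σ : ℕ → G) (t s : ℕ) : G :=
  bandWord σ t s * σ s * (bandWord σ t s)⁻¹

def BraidRelation {G : Type*} [Group G] (n : ℕ) (σ : ℕ → G) : Prop :=
  ∀ i, 1 ≤ i → i + 1 ≤ n → σ i * σ (i + 1) * σ i = σ (i + 1) * σ i * σ (i + 1)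

def FarCommute {G : Type*} [Group G] (n : ℕ) (σ : ℕ → G) : Prop :=
  ∀ i j, 1 ≤ i → i + 2 ≤ j → j ≤ n → Commute (σ i) (σ j)

section

variable {G H F : Type*} [Group G] [Group H] [FunLike F G H] [MonoidHomClass F G H]
  {σ τ : ℕ → G} {x : G} {n t s r q i : ℕ}

lemma bandWord_congr (h : ∀ i, s < i → i < t → σ i = τ i) :
    bandWord σ t s = bandWord τ t s := by
  refine congrArg List.prod (List.map_congr_left fun i hi => h i ?_ ?_) <;>
    simp only [List.mem_reverse, List.mem_range'_1] at hi <;> omega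

lemma bandGen_congr (h : ∀ i, s ≤ i → i < t → σ i = τ i) (hst : s < t) :
    bandGen σ t s = bandGen τ t s := by
  rw [bandGen, bandGen, bandWord_congr fun i hsi hit => h i hsi.le hit, h s le_rfl hst]

lemma map_bandWord (f : F) : f (bandWord σ t s) = bandWord (f ∘ σ) t s := by
  simp [bandWord, map_list_prod, List.map_map]

lemma map_bandGen (f : F) : f (bandGen σ t s) = bandGen (f ∘ σ) t s := by
  simp [bandGen, map_bandWord]

lemma bandWord_succ_self : bandWord σ (i + 1) i = 1 := by
  simp [bandWord]

lemma bandWord_eq_mul (hqi : q < i) (hir : i < r) :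
    bandWord σ r q = bandWord σ r i * σ i * bandWord σ i q := by
  have hsplit : List.range' (q + 1) (r - 1 - q)
      = List.range' (q + 1) (i - 1 - q) ++ i :: List.range' (i + 1) (r - 1 - i) := by
    rw [show r - 1 - q = (i - 1 - q) + ((r - 1 - i) + 1) by omega, ← List.range'_append,
      List.range'_succ, show q + 1 + 1 * (i - 1 - q) = i by omega]
  simp [bandWord, hsplit, mul_assoc]

lemma commute_bandWord (h : ∀ i, s < i → i < t → Commute x (σ i)) :
    Commute x (bandWord σ t s) := by
  refine Commute.list_prod_right _ _ fun y hy => ?_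
  obtain ⟨i, hi, rfl⟩ := List.mem_map.1 hy
  simp only [List.mem_reverse, List.mem_range'_1] at hi
  exact h i (by omega) (by omega)

lemma commute_bandGen (hst : s < t) (h : ∀ i, s ≤ i → i < t → Commute x (σ i)) :
    Commute x (bandGen σ t s) := by
  have hw := commute_bandWord fun i hsi hit => h i hsi.le hit
  exact (hw.mul_right (h s le_rfl hst)).mul_right hw.inv_right

lemma commute_bandGen_of_lt (hfar : FarCommute n σ) (hq : 1 ≤ q) (hqr : q < r)
    (hrs : r < s) (hst : s < t) (ht : t ≤ n + 1) :
    Commute (bandGen σ t s) (bandGen σ r q) :=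
  commute_bandGen hqr fun i hqi hir => (commute_bandGen hst fun j hsj hjt =>
    hfar i j (by omega) (by omega) (by omega)).symm

lemma semiconjBy_bandWord (hbraid : BraidRelation n σ) (hfar : FarCommute n σ) (hq : 1 ≤ q)
    (hqi : q < i) (hir : i + 2 ≤ r) (hr : r ≤ n + 1) :
    SemiconjBy (bandWord σ r q) (σ (i + 1)) (σ i) := by
  have hsplit :
      bandWord σ r q = bandWord σ r (i + 1) * (σ (i + 1) * σ i) * bandWord σ i q := by
    rw [bandWord_eq_mul (i := i + 1) (by omega) (by omega), bandWord_eq_mul (r := i + 1) hqi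
      (by omega), bandWord_succ_self]
    group
  have hhigh : Commute (σ i) (bandWord σ r (i + 1)) :=
    commute_bandWord fun j hij hjr => hfar i j (by omega) (by omega) (by omega)
  have hlow : Commute (σ (i + 1)) (bandWord σ i q) :=
    commute_bandWord fun j hqj hji => (hfar j (i + 1) (by omega) (by omega) (by omega)).symm
  have hbr : SemiconjBy (σ (i + 1) * σ i) (σ (i + 1)) (σ i) := by
    simpa only [SemiconjBy, mul_assoc] using (hbraid i (by omega) (by omega)).symm
  rw [hsplit]
  exact SemiconjBy.mul_left (SemiconjBy.mul_left hhigh.symm hbr) hlow.symm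

lemma commute_bandGen_of_nested (hbraid : BraidRelation n σ) (hfar : FarCommute n σ)
    (hq : 1 ≤ q) (hqs : q < s) (hst : s < t) (htr : t < r) (hr : r ≤ n + 1) :
    Commute (bandGen σ t s) (bandGen σ r q) := by
  set c := MulAut.conj (bandWord σ r q)
  have hshift : bandGen σ t s = c (bandGen (fun i => σ (i + 1)) t s) := by
    rw [map_bandGen]
    refine bandGen_congr (fun i hsi hit => ?_) hst
    exact (mul_inv_eq_of_eq_mul
      (semiconjBy_bandWord hbraid hfar hq (by omega) (by omega) hr).eq).symm
  have hcomm : Commute (bandGen (fun i => σ (i + 1)) t s) (σ q) :=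
    (commute_bandGen hst fun i hsi hit => hfar q (i + 1) hq (by omega) (by omega)).symm
  rw [hshift]
  exact hcomm.map c

end

lemma disjoint_or_nested_of_pos {t s r q : ℤ}
    (hpos : 0 < (t - r) * (t - q) * (s - r) * (s - q)) :
    r < s ∨ t < q ∨ (q < s ∧ t < r) ∨ (s < q ∧ r < t) := by
  by_contra! h
  obtain ⟨hsr, hqt, hnest, hnest'⟩ := h
  rcases lt_trichotomy q s with hqs | rfl | hsq
  · have hrt := hnest hqs
    have : (t - r) * (t - q) * (s - r) * (s - q) ≤ 0 := by
      apply mul_nonpos_of_nonpos_of_nonneg _ (by linarith)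
      exact mul_nonpos_of_nonneg_of_nonpos (mul_nonneg (by linarith) (by linarith)) (by linarith)
    linarith
  · simp at hpos
  · have htr := hnest' hsq
    have : (t - r) * (t - q) * (s - r) * (s - q) ≤ 0 := by
      apply mul_nonpos_of_nonneg_of_nonpos _ (by linarith)
      exact mul_nonneg_of_nonpos_of_nonpos
        (mul_nonpos_of_nonpos_of_nonneg (by linarith) (by linarith)) (by linarith)
    linarith

/-- In the braid group `B(A_n)`, the band generators `a_{ts}` and `a_{rq}` commute whenever
`(t−r)(t−q)(s−r)(s−q) > 0`. -/
theorem band_generators_commute {G : Type*} [Group G] (n : ℕ) (σ : ℕ → G)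
    (hbraid : ∀ i, 1 ≤ i → i + 1 ≤ n → σ i * σ (i + 1) * σ i = σ (i + 1) * σ i * σ (i + 1))
    (hcomm : ∀ i j, 1 ≤ i → i + 2 ≤ j → j ≤ n → σ i * σ j = σ j * σ i)
    (t s r q : ℕ) (ht : t ≤ n + 1) (hts : s < t) (hs : 1 ≤ s)
    (hr : r ≤ n + 1) (hrq : q < r) (hq : 1 ≤ q)
    (hpos : 0 < ((t : ℤ) - r) * ((t : ℤ) - q) * ((s : ℤ) - r) * ((s : ℤ) - q)) :
    bandGen σ t s * bandGen σ r q = bandGen σ r q * bandGen σ t s := by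
  rcases disjoint_or_nested_of_pos hpos with hrs | htq | ⟨hqs, htr⟩ | ⟨hsq, hrt⟩
  · exact (commute_bandGen_of_lt hcomm hq hrq (by omega) hts ht).eq
  · exact (commute_bandGen_of_lt hcomm hs hts (by omega) hrq hr).symm.eq
  · exact (commute_bandGen_of_nested hbraid hcomm hq (by omega) hts (by omega) hr).eq
  · exact (commute_bandGen_of_nested hbraid hcomm hs (by omega) hrq (by omega) ht).symm.eq
end
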